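/- Let R be a commutative ring, σ a finite index type, and for n : σ →₀ ℕ let D_n be the divided-power operator on MvPolynomial σ R. Then the generalized Leibniz rule holds: for all f, g ∈ MvPolynomial σ R and all n, D_n(f * g) = Σ_{l ≤ n} D_l(f) * D_{n−l}(g), the sum being over all l : σ →₀ ℕ with l ≤ n componentwise. -/

import Mathlib

/-!
On monomials both sides are multiples of `X ^ (m + m' - n)`, and comparing the coefficients is
Vandermonde's identity `(m + m').choose n = ∑ j ≤ n, m.choose j * m'.choose (n - j)` taken in
every coordinate: the product over `i` of these sums expands into a sum over `l ≤ n`.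
The general case follows by bilinearity.
-/

/-- The divided-power operator `D_n` on `MvPolynomial σ R`, determined on monomials by
`D_n (X ^ m) = (∏ i, Nat.choose (m i) (n i)) • X ^ (m - n)` (componentwise truncated
subtraction). -/
noncomputable def dpOp (R : Type*) [CommRing R] (σ : Type*) [Fintype σ] (n : σ →₀ ℕ) :
    MvPolynomial σ R →ₗ[R] MvPolynomial σ R :=
  Finsupp.lsum ℕ (fun m : σ →₀ ℕ =>
    (∏ i, Nat.choose (m i) (n i)) • (MvPolynomial.monomial (m - n) : R →ₗ[R] MvPolynomial σ R))
    ∘ₗ (AddMonoidAlgebra.coeffLinearEquiv R).toLinearMap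

open Finset MvPolynomial

theorem Nat.add_choose_eq_sum_Iic (m m' n : ℕ) :
    (m + m').choose n = ∑ j ∈ Iic n, m.choose j * m'.choose (n - j) := by
  rw [Nat.add_choose_eq, Finset.Nat.sum_antidiagonal_eq_sum_range_succ
    (fun a b => m.choose a * m'.choose b), Nat.range_succ_eq_Iic]

theorem Finsupp.prod_univ_sum_Iic {σ M : Type*} [Fintype σ] [DecidableEq σ] [CommSemiring M]
    (n : σ →₀ ℕ) (f : σ → ℕ → M) :
    ∏ i, ∑ j ∈ Iic (n i), f i j = ∑ l ∈ Iic n, ∏ i, f i (l i) := by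
  rw [prod_univ_sum]
  refine sum_equiv Finsupp.equivFunOnFinite.symm (fun l => ?_) (fun _ _ => rfl)
  simp [Fintype.mem_piFinset, Finsupp.le_def]

theorem Finsupp.prod_add_choose_eq_sum_Iic {σ : Type*} [Fintype σ] [DecidableEq σ]
    (m m' n : σ →₀ ℕ) :
    ∏ i, (m i + m' i).choose (n i)
      = ∑ l ∈ Iic n, ∏ i, (m i).choose (l i) * (m' i).choose ((n - l) i) := by
  simp only [Nat.add_choose_eq_sum_Iic, Finsupp.prod_univ_sum_Iic, Finsupp.tsub_apply]

theorem Finsupp.prod_choose_eq_zero_of_not_le {σ : Type*} [Fintype σ] {m l : σ →₀ ℕ}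
    (h : ¬l ≤ m) : ∏ i, (m i).choose (l i) = 0 := by
  obtain ⟨i, hi⟩ := not_forall.1 (mt Finsupp.le_def.2 h)
  exact prod_eq_zero (mem_univ i) (Nat.choose_eq_zero_of_lt (not_le.1 hi))

section dpOp

variable {R : Type*} [CommRing R] {σ : Type*} [Fintype σ]

theorem dpOp_monomial (n m : σ →₀ ℕ) (r : R) :
    dpOp R σ n (monomial m r) = (∏ i, (m i).choose (n i)) • monomial (m - n) r :=
  -- `coeffLinearEquiv` sends `monomial m r` to `Finsupp.single m r` definitionally.
  Finsupp.lsum_single ℕ _ m r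

theorem dpOp_monomial_mul_dpOp_monomial (l k m m' : σ →₀ ℕ) (r s : R) :
    dpOp R σ l (monomial m r) * dpOp R σ k (monomial m' s)
      = (∏ i, (m i).choose (l i) * (m' i).choose (k i)) •
          monomial (m + m' - (l + k)) (r * s) := by
  rw [dpOp_monomial, dpOp_monomial, smul_mul_smul_comm, monomial_mul, prod_mul_distrib]
  by_cases hl : l ≤ m
  swap
  · rw [Finsupp.prod_choose_eq_zero_of_not_le hl, zero_mul, zero_smul, zero_smul]
  by_cases hk : k ≤ m'
  swap
  · rw [Finsupp.prod_choose_eq_zero_of_not_le hk, mul_zero, zero_smul, zero_smul]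
  rw [tsub_add_tsub_comm hl hk]

end dpOp

/-- Generalized Leibniz rule: `D_n (f * g) = ∑_(l ≤ n) D_l f * D_(n-l) g`. -/
theorem dpOp_leibniz (R : Type*) [CommRing R] (σ : Type*) [Fintype σ] [DecidableEq σ]
    (f g : MvPolynomial σ R) (n : σ →₀ ℕ) :
    dpOp R σ n (f * g) = ∑ l ∈ Finset.Iic n, dpOp R σ l f * dpOp R σ (n - l) g := by
  induction f using MvPolynomial.induction_on' with
  | add p q hp hq => simp only [add_mul, map_add, hp, hq, ← sum_add_distrib]
  | monomial m r =>
    induction g using MvPolynomial.induction_on' with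
    | add p q hp hq => simp only [mul_add, map_add, hp, hq, ← sum_add_distrib]
    | monomial m' s =>
      calc dpOp R σ n (monomial m r * monomial m' s)
          = (∏ i, (m i + m' i).choose (n i)) • monomial (m + m' - n) (r * s) := by
            rw [monomial_mul, dpOp_monomial]
            rfl
        _ = ∑ l ∈ Iic n, (∏ i, (m i).choose (l i) * (m' i).choose ((n - l) i)) •
              monomial (m + m' - n) (r * s) := by
            rw [Finsupp.prod_add_choose_eq_sum_Iic, sum_smul]
        _ = _ := sum_congr rfl fun l hl => by
            rw [dpOp_monomial_mul_dpOp_monomial, add_tsub_cancel_of_le (mem_Iic.1 hl)]
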